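/- arXiv:2307.16380 — 4 statements merged into one kernel-verified Lean document; each statement's English description precedes it below -/
import Mathlib

section
/- Let a⁺ > 0 > a⁻, and let ρ̄, (ρu)̄, Ē, Γ̄, Π̄ be real numbers with ρ̄ > 0 and Γ̄ > 0. Define the left/right states by ρ^{L,R} = ρ̄ + δ^ρ/a^{∓}, Γ^{L,R} = Γ̄ + δ^Γ/a^{∓}, Π^{L,R} = Π̄ + δ^Π/a^{∓} (where the L values use a⁻ and the R values use a⁺), (ρu)^{L,R} = (ρ^{L,R}/ρ̄)·(ρu)̄, and E^{L,R} given by formulas (2.2.13) of the paper, i.e. E^L = (1 + δ^Γ/(a⁻Γ̄))Ē + (δ^ρΓ̄ − δ^Γρ̄)/(2a⁻Γ̄)·u² + (δ^ΠΓ̄ − δ^ΓΠ̄)/(a⁻Γ̄), with u = (ρu)̄/ρ̄, and E^R analogously with a⁺. Assume ρ^L, ρ^R, Γ^L, Γ^R > 0. Then the velocities agree: (ρu)^L/ρ^L = (ρu)^R/ρ^R, and the pressures agree: (1/Γ^L)(E^L − ((ρu)^L)²/(2ρ^L) − Π^L) = (1/Γ^R)(E^R − ((ρu)^R)²/(2ρ^R)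 − Π^R). -/
theorem velocity_pressure_continuity_subcell
    (ap am ρ m E Γ PI δρ δΓ δPI : ℝ)
    (hap : 0 < ap) (ham : am < 0) (hρ : 0 < ρ) (hΓ : 0 < Γ)
    (ρL ρR ΓL ΓR PIL PIR mL mR EL ER u : ℝ)
    (hu : u = m / ρ)
    (hρL : ρL = ρ + δρ / am) (hρR : ρR = ρ + δρ / ap)
    (hΓL : ΓL = Γ + δΓ / am) (hΓR : ΓR = Γ + δΓ / ap)
    (hPIL : PIL = PI + δPI / am) (hPIR : PIR = PI + δPI / ap)
    (hmL : mL = (ρL / ρ) * m) (hmR : mR = (ρR / ρ) * m)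
    (hEL : EL = (1 + δΓ / (am * Γ)) * E
        + (δρ * Γ - δΓ * ρ) / (2 * am * Γ) * u ^ 2
        + (δPI * Γ - δΓ * PI) / (am * Γ))
    (hER : ER = (1 + δΓ / (ap * Γ)) * E
        + (δρ * Γ - δΓ * ρ) / (2 * ap * Γ) * u ^ 2
        + (δPI * Γ - δΓ * PI) / (ap * Γ))
    (hρLpos : 0 < ρL) (hρRpos : 0 < ρR) (hΓLpos : 0 < ΓL) (hΓRpos : 0 < ΓR) :
    mL / ρL = mR / ρR ∧
    (1 / ΓL) * (EL - mL ^ 2 / (2 * ρL) - PIL)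
      = (1 / ΓR) * (ER - mR ^ 2 / (2 * ρR) - PIR) := by
  have hamne : am ≠ 0 := ne_of_lt ham
  have hapne : ap ≠ 0 := ne_of_gt hap
  have hρne : ρ ≠ 0 := ne_of_gt hρ
  have hΓne : Γ ≠ 0 := ne_of_gt hΓ
  have hρLne : ρL ≠ 0 := ne_of_gt hρLpos
  have hρRne : ρR ≠ 0 := ne_of_gt hρRpos
  have hΓLne : ΓL ≠ 0 := ne_of_gt hΓLpos
  have hΓRne : ΓR ≠ 0 := ne_of_gt hΓRpos
  constructor
  · rw [hmL, hmR]
    field_simp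
  · have key : ∀ (a Γa ρa PIa ma Ea : ℝ), a ≠ 0 → Γa = Γ + δΓ / a →
      ρa = ρ + δρ / a → PIa = PI + δPI / a → ma = (ρa / ρ) * m →
      Ea = (1 + δΓ / (a * Γ)) * E + (δρ * Γ - δΓ * ρ) / (2 * a * Γ) * u ^ 2
        + (δPI * Γ - δΓ * PI) / (a * Γ) → ρa ≠ 0 → Γa ≠ 0 →
      (1 / Γa) * (Ea - ma ^ 2 / (2 * ρa) - PIa)
        = (1 / Γ) * (E - ρ * u ^ 2 / 2 - PI) := by
      intro a Γa ρa PIa ma Ea ha hΓa hρa hPIa hma hEa hρane hΓane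
      have hmau : ma = ρa * u := by rw [hma, hu]; field_simp
      have hsq : (ρa * u) ^ 2 / (2 * ρa) = ρa * u ^ 2 / 2 := by
        field_simp
      rw [hΓa] at hΓane
      rw [hmau, hEa, hPIa, hsq, hρa, hΓa, one_div_mul_eq_div,
        one_div_mul_eq_div, div_eq_div_iff hΓane hΓne]
      field_simp
      ring
    rw [key am ΓL ρL PIL mL EL hamne hΓL hρL hPIL hmL hEL hρLne hΓLne,
        key ap ΓR ρR PIR mR ER hapne hΓR hρR hPIR hmR hER hρRne hΓRne]
end

section
/- Let a⁺ > 0 > a⁻ and ρ̄ > 0, Γ̄ > 0. The system of four equations consisting of (i) a⁺(ρu)^R − a⁻(ρu)^L = (a⁺−a⁻)(ρu)̄, (ii) a⁺E^R − a⁻E^L = (a⁺−a⁻)Ē, (iii) (ρu)^L/ρ^L = (ρu)^R/ρ^R, and (iv) (E^L − ((ρu)^L)²/(2ρ^L) − Π^L)/Γ^L = (E^R − ((ρu)^R)²/(2ρ^R) − Π^R)/Γ^R, where ρ^{L,R}, Γ^{L,R}, Π^{L,R} are given positive parameters additionally satisfying a⁺ρ^R − a⁻ρ^L = (a⁺−a⁻)ρ̄,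 a⁺Γ^R − a⁻Γ^L = (a⁺−a⁻)Γ̄, a⁺Π^R − a⁻Π^L = (a⁺−a⁻)Π̄, has the unique solution given by the formulas (2.2.9) of the paper: (ρu)^L = (ρ^L/ρ̄)(ρu)̄, (ρu)^R = (ρ^R/ρ̄)(ρu)̄, E^L = (Γ^L/Γ̄)Ē + a⁺(Γ^Rρ^L − Γ^Lρ^R)((ρu)̄)²/(2(a⁺−a⁻)Γ̄ρ̄²) + a⁺(Γ^RΠ^L − Γ^LΠ^R)/((a⁺−a⁻)Γ̄), and E^R analogously with a⁻ in place of a⁺ in the correction terms. -/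
/-!
By (iii) and (iv) the two subcell states share one velocity `u` and one pressure `p`, and in
these primitive variables momentum `ρ u` and energy `Γ p + ρ u² / 2 + Π` are linear in the
parameters `(ρ, Γ, Π)`. As the parameters obey the same conservation law, (i) and (ii) hold
exactly when `(u, p)` is also the primitive state of the cell averages, i.e. `u = m / ρ` and
`p = (E - m² / (2ρ) - Π) / Γ`; eliminating `ρ̄`, `Γ̄`, `Π̄` through their conservation laws
then yields the closed formulas.
-/

def IsSubcellAverage (ap am x xL xR : ℝ) : Prop := ap * xR - am * xL = (ap - am) * x

noncomputable def pressure (ρ Γ PI m E : ℝ) : ℝ := (E - m ^ 2 / (2 * ρ) - PI) / Γ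

noncomputable def totalEnergy (ρ Γ PI u p : ℝ) : ℝ := Γ * p + ρ * u ^ 2 / 2 + PI

section Primitive

variable {ρ Γ PI u p q E : ℝ}

theorem pressure_mul_eq_iff (hρ : ρ ≠ 0) (hΓ : Γ ≠ 0) :
    pressure ρ Γ PI (ρ * u) E = p ↔ E = totalEnergy ρ Γ PI u p := by
  have kinetic : (ρ * u) ^ 2 / (2 * ρ) = ρ * u ^ 2 / 2 := by field_simp
  rw [pressure, totalEnergy, div_eq_iff hΓ, kinetic]
  constructor <;> intro h <;> linarith

theorem totalEnergy_inj (hΓ : Γ ≠ 0) :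
    totalEnergy ρ Γ PI u q = totalEnergy ρ Γ PI u p ↔ q = p := by
  simp only [totalEnergy, add_left_inj, mul_right_inj' hΓ]

theorem exists_eq_mul_of_div_eq_div {a b x y : ℝ} (ha : a ≠ 0) (hb : b ≠ 0)
    (h : x / a = y / b) :
    ∃ v, x = a * v ∧ y = b * v :=
  ⟨x / a, (mul_div_cancel₀ x ha).symm, by rw [h, mul_div_cancel₀ y hb]⟩

end Primitive

namespace IsSubcellAverage

variable {ap am x y xL xR yL yR : ℝ}

theorem mul_right (h : IsSubcellAverage ap am x xL xR) (c : ℝ) :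
    IsSubcellAverage ap am (x * c) (xL * c) (xR * c) := by
  unfold IsSubcellAverage at *
  linear_combination c * h

theorem unique (hne : ap ≠ am) (hx : IsSubcellAverage ap am x xL xR)
    (hy : IsSubcellAverage ap am y xL xR) : x = y :=
  mul_left_cancel₀ (sub_ne_zero.2 hne) (hx.symm.trans hy)

theorem totalEnergy {ρ ρL ρR Γ ΓL ΓR PI PIL PIR : ℝ} (hρ : IsSubcellAverage ap am ρ ρL ρR)
    (hΓ : IsSubcellAverage ap am Γ ΓL ΓR) (hPI : IsSubcellAverage ap am PI PIL PIR) (u p : ℝ) :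
    IsSubcellAverage ap am (totalEnergy ρ Γ PI u p) (totalEnergy ρL ΓL PIL u p)
      (totalEnergy ρR ΓR PIR u p) := by
  unfold IsSubcellAverage _root_.totalEnergy at *
  linear_combination p * hΓ + u ^ 2 / 2 * hρ + hPI

theorem mul_sub_mul_left (hx : IsSubcellAverage ap am x xL xR)
    (hy : IsSubcellAverage ap am y yL yR) :
    (ap - am) * (y * xL - yL * x) = ap * (yR * xL - yL * xR) := by
  unfold IsSubcellAverage at *
  linear_combination yL * hx - xL * hy

theorem mul_sub_mul_right (hx : IsSubcellAverage ap am x xL xR)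
    (hy : IsSubcellAverage ap am y yL yR) :
    (ap - am) * (y * xR - yR * x) = am * (yR * xL - yL * xR) := by
  unfold IsSubcellAverage at *
  linear_combination yR * hx - xR * hy

end IsSubcellAverage

section Projection

variable {ap am ρ Γ PI m E ρL ρR ΓL ΓR PIL PIR : ℝ}

theorem subcell_system_iff_primitive {u p mL mR EL ER : ℝ} (hne : ap ≠ am) (hρ : ρ ≠ 0)
    (hΓ : Γ ≠ 0) (hρL : ρL ≠ 0) (hρR : ρR ≠ 0) (hΓL : ΓL ≠ 0) (hΓR : ΓR ≠ 0)
    (hρs : IsSubcellAverage ap am ρ ρL ρR) (hΓs : IsSubcellAverage ap am Γ ΓL ΓR)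
    (hPIs : IsSubcellAverage ap am PI PIL PIR) (hu : ρ * u = m) (hp : E = totalEnergy ρ Γ PI u p) :
    (IsSubcellAverage ap am m mL mR ∧ IsSubcellAverage ap am E EL ER ∧ mL / ρL = mR / ρR ∧
        pressure ρL ΓL PIL mL EL = pressure ρR ΓR PIR mR ER) ↔
      (mL = ρL * u ∧ mR = ρR * u ∧ EL = totalEnergy ρL ΓL PIL u p ∧
        ER = totalEnergy ρR ΓR PIR u p) := by
  constructor
  · rintro ⟨hm, hE, hvel, hpres⟩
    obtain ⟨v, rfl, rfl⟩ := exists_eq_mul_of_div_eq_div hρL hρR hvel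
    obtain rfl : v = u :=
      mul_left_cancel₀ hρ (((hρs.mul_right v).unique hne hm).trans hu.symm)
    obtain ⟨q, hqL, hqR⟩ : ∃ q, pressure ρL ΓL PIL (ρL * v) EL = q ∧
        pressure ρR ΓR PIR (ρR * v) ER = q := ⟨_, hpres, rfl⟩
    rw [pressure_mul_eq_iff hρL hΓL] at hqL
    rw [pressure_mul_eq_iff hρR hΓR] at hqR
    subst hqL hqR
    obtain rfl : q = p :=
      (totalEnergy_inj hΓ).1 (((hρs.totalEnergy hΓs hPIs v q).unique hne hE).trans hp)
    exact ⟨rfl, rfl, rfl, rfl⟩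
  · rintro ⟨rfl, rfl, rfl, rfl⟩
    refine ⟨hu ▸ hρs.mul_right u, hp ▸ hρs.totalEnergy hΓs hPIs u p, ?_, ?_⟩
    · rw [mul_div_cancel_left₀ u hρL, mul_div_cancel_left₀ u hρR]
    · rw [(pressure_mul_eq_iff hρL hΓL).2 rfl, (pressure_mul_eq_iff hρR hΓR).2 rfl]

theorem totalEnergy_left_eq (hne : ap ≠ am) (hρ : ρ ≠ 0) (hΓ : Γ ≠ 0)
    (hρs : IsSubcellAverage ap am ρ ρL ρR) (hΓs : IsSubcellAverage ap am Γ ΓL ΓR)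
    (hPIs : IsSubcellAverage ap am PI PIL PIR) :
    totalEnergy ρL ΓL PIL (m / ρ) (pressure ρ Γ PI m E) = ΓL / Γ * E
        + ap * (ΓR * ρL - ΓL * ρR) * m ^ 2 / (2 * (ap - am) * Γ * ρ ^ 2)
        + ap * (ΓR * PIL - ΓL * PIR) / ((ap - am) * Γ) := by
  have hkin := hρs.mul_sub_mul_left hΓs
  have hint := hPIs.mul_sub_mul_left hΓs
  unfold totalEnergy pressure
  field_simp
  linear_combination m ^ 2 * hkin + 2 * ρ ^ 2 * hint

theorem totalEnergy_right_eq (hne : ap ≠ am) (hρ : ρ ≠ 0) (hΓ : Γ ≠ 0)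
    (hρs : IsSubcellAverage ap am ρ ρL ρR) (hΓs : IsSubcellAverage ap am Γ ΓL ΓR)
    (hPIs : IsSubcellAverage ap am PI PIL PIR) :
    totalEnergy ρR ΓR PIR (m / ρ) (pressure ρ Γ PI m E) = ΓR / Γ * E
        + am * (ΓR * ρL - ΓL * ρR) * m ^ 2 / (2 * (ap - am) * Γ * ρ ^ 2)
        + am * (ΓR * PIL - ΓL * PIR) / ((ap - am) * Γ) := by
  have hkin := hρs.mul_sub_mul_right hΓs
  have hint := hPIs.mul_sub_mul_right hΓs
  unfold totalEnergy pressure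
  field_simp
  linear_combination m ^ 2 * hkin + 2 * ρ ^ 2 * hint

end Projection

theorem subcell_momentum_energy_unique_solution_general
    (ap am ρ m E Γ PI : ℝ)
    (hap : 0 < ap) (ham : am < 0) (hρ : 0 < ρ) (hΓ : 0 < Γ)
    (ρL ρR ΓL ΓR PIL PIR : ℝ)
    (hρLpos : 0 < ρL) (hρRpos : 0 < ρR) (hΓLpos : 0 < ΓL) (hΓRpos : 0 < ΓR)
    (hρcons : ap * ρR - am * ρL = (ap - am) * ρ)
    (hΓcons : ap * ΓR - am * ΓL = (ap - am) * Γ)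
    (hPIcons : ap * PIR - am * PIL = (ap - am) * PI)
    (mL mR EL ER : ℝ) :
    (ap * mR - am * mL = (ap - am) * m ∧
     ap * ER - am * EL = (ap - am) * E ∧
     mL / ρL = mR / ρR ∧
     (EL - mL ^ 2 / (2 * ρL) - PIL) / ΓL = (ER - mR ^ 2 / (2 * ρR) - PIR) / ΓR)
    ↔
    (mL = (ρL / ρ) * m ∧ mR = (ρR / ρ) * m ∧
     EL = (ΓL / Γ) * E
        + ap * (ΓR * ρL - ΓL * ρR) * m ^ 2 / (2 * (ap - am) * Γ * ρ ^ 2)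
        + ap * (ΓR * PIL - ΓL * PIR) / ((ap - am) * Γ) ∧
     ER = (ΓR / Γ) * E
        + am * (ΓR * ρL - ΓL * ρR) * m ^ 2 / (2 * (ap - am) * Γ * ρ ^ 2)
        + am * (ΓR * PIL - ΓL * PIR) / ((ap - am) * Γ)) := by
  have hne : ap ≠ am := (ham.trans hap).ne'
  have hu : ρ * (m / ρ) = m := mul_div_cancel₀ m hρ.ne'
  have hp : E = totalEnergy ρ Γ PI (m / ρ) (pressure ρ Γ PI m E) :=
    (pressure_mul_eq_iff hρ.ne' hΓ.ne').1 (by rw [hu])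
  refine (subcell_system_iff_primitive hne hρ.ne' hΓ.ne' hρLpos.ne' hρRpos.ne' hΓLpos.ne'
    hΓRpos.ne' hρcons hΓcons hPIcons hu hp).trans ?_
  rw [totalEnergy_left_eq hne hρ.ne' hΓ.ne' hρcons hΓcons hPIcons,
    totalEnergy_right_eq hne hρ.ne' hΓ.ne' hρcons hΓcons hPIcons, mul_comm_div ρL,
    mul_comm_div ρR]

theorem subcell_momentum_energy_unique_solution
    (ap am ρ m E Γ PI : ℝ)
    (hap : 0 < ap) (ham : am < 0) (hρ : 0 < ρ) (hΓ : 0 < Γ)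
    (ρL ρR ΓL ΓR PIL PIR : ℝ)
    (hρLpos : 0 < ρL) (hρRpos : 0 < ρR) (hΓLpos : 0 < ΓL) (hΓRpos : 0 < ΓR)
    (hPILpos : 0 < PIL) (hPIRpos : 0 < PIR)
    (hρcons : ap * ρR - am * ρL = (ap - am) * ρ)
    (hΓcons : ap * ΓR - am * ΓL = (ap - am) * Γ)
    (hPIcons : ap * PIR - am * PIL = (ap - am) * PI)
    (mL mR EL ER : ℝ) :
    (ap * mR - am * mL = (ap - am) * m ∧
     ap * ER - am * EL = (ap - am) * E ∧
     mL / ρL = mR / ρR ∧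
     (EL - mL ^ 2 / (2 * ρL) - PIL) / ΓL = (ER - mR ^ 2 / (2 * ρR) - PIR) / ΓR)
    ↔
    (mL = (ρL / ρ) * m ∧ mR = (ρR / ρ) * m ∧
     EL = (ΓL / Γ) * E
        + ap * (ΓR * ρL - ΓL * ρR) * m ^ 2 / (2 * (ap - am) * Γ * ρ ^ 2)
        + ap * (ΓR * PIL - ΓL * PIR) / ((ap - am) * Γ) ∧
     ER = (ΓR / Γ) * E
        + am * (ΓR * ρL - ΓL * ρR) * m ^ 2 / (2 * (ap - am) * Γ * ρ ^ 2)
        + am * (ΓR * PIL - ΓL * PIR) / ((ap - am) * Γ)) :=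
  subcell_momentum_energy_unique_solution_general ap am ρ m E Γ PI hap ham hρ hΓ ρL ρR ΓL ΓR PIL PIR
    hρLpos hρRpos hΓLpos hΓRpos hρcons hΓcons hPIcons mL mR EL ER
end

section
/- Let a⁺ > 0 > a⁻ and let U⁻, U⁺, U* be reals with U* given. Define δ = minmod(−a⁻(U* − U⁻), a⁺(U⁺ − U*)), and set U^L = U* + δ/a⁻, U^R = U* + δ/a⁺. If U⁻ ≤ U* ≤ U⁺, then U⁻ ≤ U^L ≤ U* ≤ U^R ≤ U⁺; if U⁺ ≤ U* ≤ U⁻, then U⁺ ≤ U^R ≤ U* ≤ U^L ≤ U⁻. In particular, the subcell values U^L and U^R always lie between U⁻ and U⁺ whenever U* does. -/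
noncomputable def minmod (c₁ c₂ : ℝ) : ℝ :=
  if 0 < c₁ ∧ 0 < c₂ then min c₁ c₂
  else if c₁ < 0 ∧ c₂ < 0 then max c₁ c₂
  else 0

/-!
On data ordered as `U⁻ ≤ U* ≤ U⁺` both minmod arguments are nonnegative, so `δ` is their
minimum; dividing by `-a⁻ > 0` and `a⁺ > 0` shows that the jumps `U* - U^L` and `U^R - U*` are
nonnegative and at most `U* - U⁻` and `U⁺ - U*`. The decreasing case is the increasing one
applied to `-U⁻, -U⁺, -U*`, since minmod is odd.
-/

lemma minmod_of_nonneg {a b : ℝ} (ha : 0 ≤ a) (hb : 0 ≤ b) : minmod a b = min a b := by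
  unfold minmod
  split_ifs with hpos hneg
  · rfl
  · linarith [hneg.1]
  · rcases ha.eq_or_lt with rfl | ha
    · exact (min_eq_left hb).symm
    · rcases hb.eq_or_lt with rfl | hb
      · exact (min_eq_right ha.le).symm
      · exact absurd ⟨ha, hb⟩ hpos

lemma minmod_neg (a b : ℝ) : minmod (-a) (-b) = -minmod a b := by
  unfold minmod
  simp only [neg_pos, neg_lt_zero, min_neg_neg, max_neg_neg]
  split_ifs with hneg hpos
  · linarith [hneg.1, hpos.1]
  all_goals simp

lemma subcell_values_bounds_of_le {ap am Um Up Ustar : ℝ} (hap : 0 < ap) (ham : am < 0)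
    (hm : Um ≤ Ustar) (hp : Ustar ≤ Up) :
    let δ := minmod (-am * (Ustar - Um)) (ap * (Up - Ustar))
    Um ≤ Ustar + δ / am ∧ Ustar + δ / am ≤ Ustar ∧ Ustar ≤ Ustar + δ / ap ∧
      Ustar + δ / ap ≤ Up := by
  intro δ
  have hL : 0 ≤ -am * (Ustar - Um) := mul_nonneg (by linarith) (by linarith)
  have hR : 0 ≤ ap * (Up - Ustar) := mul_nonneg hap.le (by linarith)
  have hδ : δ = min (-am * (Ustar - Um)) (ap * (Up - Ustar)) := minmod_of_nonneg hL hR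
  have hδ0 : 0 ≤ δ := hδ ▸ le_min hL hR
  have hδL : δ / -am ≤ Ustar - Um :=
    (div_le_iff₀' (neg_pos.2 ham)).2 (hδ ▸ min_le_left _ _)
  have hδR : δ / ap ≤ Up - Ustar := (div_le_iff₀' hap).2 (hδ ▸ min_le_right _ _)
  have hδL0 : 0 ≤ δ / -am := div_nonneg hδ0 (by linarith)
  have hδR0 : 0 ≤ δ / ap := div_nonneg hδ0 hap.le
  rw [div_neg] at hδL hδL0
  refine ⟨?_, ?_, ?_, ?_⟩ <;> linarith

theorem subcell_values_bound_preserving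
    (ap am Um Up Ustar : ℝ) (hap : 0 < ap) (ham : am < 0)
    (δ UL UR : ℝ)
    (hδ : δ = minmod (-am * (Ustar - Um)) (ap * (Up - Ustar)))
    (hUL : UL = Ustar + δ / am) (hUR : UR = Ustar + δ / ap) :
    ((Um ≤ Ustar ∧ Ustar ≤ Up) →
      Um ≤ UL ∧ UL ≤ Ustar ∧ Ustar ≤ UR ∧ UR ≤ Up) ∧
    ((Up ≤ Ustar ∧ Ustar ≤ Um) →
      Up ≤ UR ∧ UR ≤ Ustar ∧ Ustar ≤ UL ∧ UL ≤ Um) := by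
  subst hUL hUR hδ
  refine ⟨fun ⟨hm, hp⟩ => subcell_values_bounds_of_le hap ham hm hp, fun ⟨hp, hm⟩ => ?_⟩
  have hmirror := subcell_values_bounds_of_le (Um := -Um) (Up := -Up) hap ham
    (neg_le_neg hm) (neg_le_neg hp)
  have hodd : minmod (-am * (-Ustar - -Um)) (ap * (-Up - -Ustar)) =
      -minmod (-am * (Ustar - Um)) (ap * (Up - Ustar)) := by
    rw [← minmod_neg]; congr 1 <;> ring
  simp only [hodd, neg_div] at hmirror
  obtain ⟨h₁, h₂, h₃, h₄⟩ := hmirror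
  refine ⟨?_, ?_, ?_, ?_⟩ <;> linarith
end

section
/- Suppose Γ⁺_{j+1/2} = Γ⁻_{j+1/2} = Γ⁺_{j−1/2} = Γ̂ for all interfaces (constant reconstructed Γ). Define F^{(4),±}_{j+1/2} = Γ̂u^±_{j+1/2}, B^{(4)}_j = Γ̂(u⁻_{j+1/2} − u⁺_{j−1/2}), B^{(4)}_{Ψ,j+1/2} = Γ̂(u⁺_{j+1/2} − u⁻_{j+1/2}), and set the global fluxes K^{(4),−}_{1/2} arbitrary with the recursions K^{(4),+}_{j+1/2} = K^{(4),−}_{j+1/2} + F^{(4),+}_{j+1/2} − F^{(4),−}_{j+1/2} − B^{(4)}_{Ψ,j+1/2} and K^{(4),−}_{j+1/2} = K^{(4),+}_{j−1/2} + F^{(4),−}_{j+1/2} − F^{(4),+}_{j−1/2} − B^{(4)}_j. Then K^{(4),+}_{j+1/2} = K^{(4),−}_{j+1/2} for all j, and K^{(4),−}_{j+1/2} = K^{(4),+}_{j−1/2} for all j; consequently the Γ-component of the central-upwind flux difference 𝒦^{(4)}_{j+1/2} − 𝒦^{(4)}_{j−1/2} vanishes and dΓ̄_j/dt = 0. -/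
theorem constant_gamma_flux_difference_vanishes
    (Γh : ℝ)
    (um up : ℤ → ℝ)          -- u⁻_{j+1/2}, u⁺_{j+1/2}
    (ap am : ℤ → ℝ)          -- local speeds at interfaces
    (hsp : ∀ j, 0 < ap j) (hsm : ∀ j, am j < 0)
    (F4m F4p B4 B4Ψ K4m K4p : ℤ → ℝ)
    (hF4m : ∀ j, F4m j = Γh * um j)
    (hF4p : ∀ j, F4p j = Γh * up j)
    (hB4 : ∀ j, B4 j = Γh * (um j - up (j - 1)))
    (hB4Ψ : ∀ j, B4Ψ j = Γh * (up j - um j))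
    (hKp : ∀ j, K4p j = K4m j + (F4p j - F4m j) - B4Ψ j)
    (hKm : ∀ j, K4m j = K4p (j - 1) + (F4m j - F4p (j - 1)) - B4 j)
    (𝒦4 : ℤ → ℝ)
    (h𝒦 : ∀ j, 𝒦4 j =
        (ap j * K4m j - am j * K4p j) / (ap j - am j)
        + (ap j * am j) / (ap j - am j) * (Γh - Γh)
        + minmod (-am j * ((ap j * Γh - am j * Γh - (K4p j - K4m j)) / (ap j - am j) - Γh))
                 (ap j * (Γh - (ap j * Γh - am j * Γh - (K4p j - K4m j)) / (ap j - am j)))) :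
    (∀ j, K4p j = K4m j) ∧ (∀ j, K4m j = K4p (j - 1)) ∧
    (∀ j, 𝒦4 j - 𝒦4 (j - 1) = 0) := by
  have hpm : ∀ j, K4p j = K4m j := by
    intro j; rw [hKp, hF4p, hF4m, hB4Ψ]; ring
  have hmp : ∀ j, K4m j = K4p (j - 1) := by
    intro j; rw [hKm, hF4m, hF4p, hB4]; ring
  refine ⟨hpm, hmp, ?_⟩
  have hK : ∀ j, 𝒦4 j = K4m j := by
    intro j
    have hne : ap j - am j ≠ 0 := by
      have := hsp j; have := hsm j; linarith
    rw [h𝒦 j, hpm j]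
    have h0 : (ap j * Γh - am j * Γh - (K4m j - K4m j)) / (ap j - am j) - Γh = 0 := by
      field_simp; ring
    have h1 : Γh - (ap j * Γh - am j * Γh - (K4m j - K4m j)) / (ap j - am j) = 0 := by
      field_simp; ring
    rw [h0, h1, mul_zero, mul_zero]
    simp [minmod]
    field_simp
  intro j
  rw [hK j, hK (j-1), hmp j, hpm (j-1)]
  ring
end
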